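/- arXiv:2205.15498 — 4 statements merged into one kernel-verified Lean document; each statement's English description precedes it below -/
import Mathlib

section
/- Let p be a prime with p ≡ 5 (mod 8). Then the (p+1)×(p+1) integer matrices X and Y satisfy Xᵀ = −X, Yᵀ = −Y, and XY = YX. -/
open Matrix

/-- Entry `χ(c)` where `b - a = c²` is a nonzero square (value `1` if `c` can be chosen a
square, i.e. `b - a` is a nonzero fourth power, `-1` if `b - a` is a nonzero square that is
not a fourth power, and `0` otherwise). -/
def RX (p : ℕ) [NeZero p] : Matrix (ZMod p) (ZMod p) ℤ :=
  Matrix.of fun a b =>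
    if ∃ c : ZMod p, c ≠ 0 ∧ c ^ 2 = b - a ∧ ∃ d : ZMod p, d ^ 2 = c then 1
    else if ∃ c : ZMod p, c ≠ 0 ∧ c ^ 2 = b - a then -1
    else 0

def RY (p : ℕ) [NeZero p] : Matrix (ZMod p) (ZMod p) ℤ :=
  Matrix.of fun a b =>
    if ∃ c : ZMod p, c ≠ 0 ∧ c ^ 2 = 2 * (b - a) ∧ ∃ d : ZMod p, d ^ 2 = c then 1
    else if ∃ c : ZMod p, c ≠ 0 ∧ c ^ 2 = 2 * (b - a) then -1
    else 0

def Xmat (p : ℕ) [NeZero p] : Matrix (Option (ZMod p)) (Option (ZMod p)) ℤ :=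
  Matrix.of fun i j =>
    match i, j with
    | none, none => 0
    | none, some _ => 1
    | some _, none => -1
    | some a, some b => RX p a b

def Ymat (p : ℕ) [NeZero p] : Matrix (Option (ZMod p)) (Option (ZMod p)) ℤ :=
  Matrix.of fun i j =>
    match i, j with
    | none, _ => 0
    | some _, none => 0
    | some a, some b => RY p a b

/-- Index set of the length `2(p+1)` code. -/
abbrev NVIdx (p : ℕ) := Option (ZMod p) ⊕ Option (ZMod p)

def Bw (p : ℕ) [NeZero p] : Matrix (NVIdx p) (NVIdx p) ℤ :=
  Matrix.fromBlocks (Xmat p) (Ymat p) (-(Ymat p)ᵀ) (Xmat p)ᵀ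

/-- Generator matrix `a I + B_w` (over `ℤ`). -/
def NVgen (p : ℕ) [NeZero p] (a : ℤ) : Matrix (NVIdx p) (NVIdx p) ℤ :=
  a • (1 : Matrix (NVIdx p) (NVIdx p) ℤ) + Bw p

/-- The ternary code `NV^(a)(p)`: the row space over `𝔽₃` of `a I + B_w` reduced mod 3. -/
def NVcode (p : ℕ) [NeZero p] (a : ℤ) : Submodule (ZMod 3) (NVIdx p → ZMod 3) :=
  Submodule.span (ZMod 3) (Set.range fun i => ((NVgen p a).map (Int.cast : ℤ → ZMod 3)) i)

/-- The matrix `H_{NV^(a)(p)}`. -/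
def Hnv (p : ℕ) [NeZero p] (a : ℤ) : Matrix (NVIdx p) (NVIdx p) ℤ :=
  Matrix.fromBlocks
    (Xmat p - (Ymat p)ᵀ + a • 1) (Ymat p + (Xmat p)ᵀ + a • 1)
    (-(Ymat p)ᵀ - Xmat p - a • 1) ((Xmat p)ᵀ - Ymat p + a • 1)

/-- Weight of a ternary vector: the number of nonzero coordinates. -/
def wt {ι : Type*} [Fintype ι] (v : ι → ZMod 3) : ℕ :=
  (Finset.univ.filter fun i => v i ≠ 0).card

/-- `H` is a Hadamard matrix of order `n`. -/
def IsHadamard {ι : Type*} [Fintype ι] [DecidableEq ι] (n : ℕ) (H : Matrix ι ι ℤ) : Prop :=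
  (∀ i j, H i j = 1 ∨ H i j = -1) ∧ H * Hᵀ = (n : ℤ) • (1 : Matrix ι ι ℤ)

/-! `RX` and `RY` are transposed circulant matrices over `𝔽_p`, with first rows `f x = χ(√x)` and
`f (2 x)`, so they commute. Since `p ≡ 5 (mod 8)`, `-1 = i²` is a square while
`χ(i) = i ^ ((p - 1) / 2) = (-1) ^ ((p - 1) / 4) = -1`; hence `f (-c²) = f ((i c)²) = -f (c²)`.
So `f` is odd: both circulants are skew, and the row and column sums of `RY`, the only entries
through which the border of `X` enters `XY` and `YX`, vanish. -/

namespace FiniteField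

variable {K : Type*} [Field K] [Fintype K]

lemma ringChar_ne_two_of_card_mod_eight (hK : Fintype.card K % 8 = 5) : ringChar K ≠ 2 :=
  fun h => by have := even_card_iff_char_two.mp h; omega

lemma exists_sq_eq_neg_one_of_card_mod_eight (hK : Fintype.card K % 8 = 5) :
    ∃ i : K, i ^ 2 = -1 := by
  obtain ⟨i, hi⟩ := isSquare_neg_one_iff.mpr (by omega : Fintype.card K % 4 ≠ 3)
  exact ⟨i, by rw [sq, hi]⟩

variable [DecidableEq K]

lemma quadraticChar_eq_neg_one_of_sq_eq_neg_one (hK : Fintype.card K % 8 = 5) {i : K}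
    (hi : i ^ 2 = -1) : quadraticChar K i = -1 := by
  have hchar := ringChar_ne_two_of_card_mod_eight hK
  have hi0 : i ≠ 0 := by rintro rfl; simp at hi
  have hpow : i ^ (Fintype.card K / 2) = -1 := by
    obtain ⟨m, hm⟩ : ∃ m, Fintype.card K / 2 = 2 * (2 * m + 1) := ⟨Fintype.card K / 8, by omega⟩
    rw [hm, pow_mul, hi, Odd.neg_one_pow ⟨m, rfl⟩]
  rw [quadraticChar_eq_pow_of_char_ne_two hchar hi0, hpow,
    if_neg (Ring.neg_one_ne_one_of_char_ne_two hchar)]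

def chiSqrt (x : K) : ℤ :=
  if ∃ c : K, c ≠ 0 ∧ c ^ 2 = x ∧ ∃ d : K, d ^ 2 = c then 1
  else if ∃ c : K, c ≠ 0 ∧ c ^ 2 = x then -1
  else 0

lemma chiSqrt_eq_zero {x : K} (hx : ¬∃ c : K, c ≠ 0 ∧ c ^ 2 = x) : chiSqrt x = 0 := by
  have hx' : ¬∃ c : K, c ≠ 0 ∧ c ^ 2 = x ∧ ∃ d : K, d ^ 2 = c :=
    fun ⟨c, hc, hcx, _⟩ => hx ⟨c, hc, hcx⟩
  rw [chiSqrt, if_neg hx', if_neg hx]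

lemma chiSqrt_sq (hK : IsSquare (-1 : K)) {c : K} (hc : c ≠ 0) :
    chiSqrt (c ^ 2) = quadraticChar K c := by
  have hneg : IsSquare (-c) ↔ IsSquare c :=
    ⟨fun h => by simpa using hK.mul h, fun h => by simpa using hK.mul h⟩
  have hroot : (∃ c' : K, c' ≠ 0 ∧ c' ^ 2 = c ^ 2 ∧ ∃ d : K, d ^ 2 = c') ↔ IsSquare c := by
    constructor
    · rintro ⟨c', -, hc', d, rfl⟩
      rcases sq_eq_sq_iff_eq_or_eq_neg.mp hc' with h | h
      · exact h ▸ IsSquare.sq d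
      · exact hneg.mp (h ▸ IsSquare.sq d)
    · rintro ⟨r, rfl⟩
      exact ⟨r * r, hc, rfl, r, sq r⟩
  by_cases hsq : IsSquare c
  · rw [chiSqrt, if_pos (hroot.mpr hsq), (quadraticChar_one_iff_isSquare hc).mpr hsq]
  · rw [chiSqrt, if_neg (hroot.not.mpr hsq), if_pos ⟨c, hc, rfl⟩,
      quadraticChar_neg_one_iff_not_isSquare.mpr hsq]

lemma chiSqrt_odd (hK : Fintype.card K % 8 = 5) : Function.Odd (chiSqrt (K := K)) := by
  intro x
  obtain ⟨i, hi⟩ := exists_sq_eq_neg_one_of_card_mod_eight hK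
  have hi0 : i ≠ 0 := by rintro rfl; simp at hi
  have hK' : IsSquare (-1 : K) := ⟨i, by rw [← hi, sq]⟩
  by_cases hx : ∃ c : K, c ≠ 0 ∧ c ^ 2 = x
  · obtain ⟨c, hc, rfl⟩ := hx
    have hic : -c ^ 2 = (i * c) ^ 2 := by rw [mul_pow, hi]; ring
    rw [hic, chiSqrt_sq hK' (mul_ne_zero hi0 hc), chiSqrt_sq hK' hc, map_mul,
      quadraticChar_eq_neg_one_of_sq_eq_neg_one hK hi, neg_one_mul]
  · have hx' : ¬∃ c : K, c ≠ 0 ∧ c ^ 2 = -x := fun ⟨c, hc, hcx⟩ =>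
      hx ⟨i * c, mul_ne_zero hi0 hc, by rw [mul_pow, hi, hcx]; ring⟩
    rw [chiSqrt_eq_zero hx, chiSqrt_eq_zero hx', neg_zero]

end FiniteField

namespace Matrix

variable {n α : Type*}

lemma transpose_circulant_of_odd [SubtractionMonoid n] [Neg α] {v : n → α}
    (hv : Function.Odd v) : (circulant v)ᵀ = -circulant v := by
  rw [transpose_circulant, ← circulant_neg]
  exact congrArg circulant (funext hv)

lemma sum_circulant_row [AddGroup n] [Fintype n] [AddCommMonoid α] (v : n → α) (i : n) :
    ∑ j, circulant v i j = ∑ x, v x :=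
  Fintype.sum_equiv (Equiv.subLeft i) _ _ fun _ => rfl

lemma sum_circulant_col [AddGroup n] [Fintype n] [AddCommMonoid α] (v : n → α) (j : n) :
    ∑ i, circulant v i j = ∑ x, v x :=
  Fintype.sum_equiv (Equiv.subRight j) _ _ fun _ => rfl

end Matrix

open FiniteField

section

variable (p : ℕ) [NeZero p]

lemma Xmat_transpose (h : (RX p)ᵀ = -RX p) : (Xmat p)ᵀ = -Xmat p := by
  ext (_ | a) (_ | b) <;> simp [Xmat]
  exact congrFun₂ h a b

lemma Ymat_transpose (h : (RY p)ᵀ = -RY p) : (Ymat p)ᵀ = -Ymat p := by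
  ext (_ | a) (_ | b) <;> simp [Ymat]
  exact congrFun₂ h a b

lemma Xmat_mul_Ymat_comm (hcomm : RX p * RY p = RY p * RX p)
    (hrow : ∀ a, ∑ c, RY p a c = 0) (hcol : ∀ b, ∑ c, RY p c b = 0) :
    Xmat p * Ymat p = Ymat p * Xmat p := by
  have hcomm' (a b : ZMod p) : ∑ c, RX p a c * RY p c b = ∑ c, RY p a c * RX p c b := by
    simpa only [mul_apply] using congrFun₂ hcomm a b
  ext (_ | a) (_ | b) <;> simp [mul_apply, Fintype.sum_option, Xmat, Ymat, hrow, hcol, hcomm']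

end

section

variable (p : ℕ) [Fact p.Prime]

lemma RX_eq_transpose_circulant : RX p = (circulant (chiSqrt (K := ZMod p)))ᵀ := rfl

lemma RY_eq_transpose_circulant :
    RY p = (circulant (chiSqrt ∘ (2 * ·) : ZMod p → ℤ))ᵀ := rfl

lemma RX_mul_RY_comm : RX p * RY p = RY p * RX p := by
  rw [RX_eq_transpose_circulant, RY_eq_transpose_circulant, ← transpose_mul, ← transpose_mul,
    circulant_mul_comm]

variable {p} (hp : p % 8 = 5)
include hp

lemma chiSqrt_zmod_odd : Function.Odd (chiSqrt (K := ZMod p)) :=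
  chiSqrt_odd (by rwa [ZMod.card])

lemma chiSqrt_two_mul_zmod_odd : Function.Odd (chiSqrt ∘ (2 * ·) : ZMod p → ℤ) :=
  (chiSqrt_zmod_odd hp).comp_odd (mul_neg 2)

lemma RX_transpose : (RX p)ᵀ = -RX p := by
  rw [RX_eq_transpose_circulant, transpose_transpose,
    transpose_circulant_of_odd (chiSqrt_zmod_odd hp), neg_neg]

lemma RY_transpose : (RY p)ᵀ = -RY p := by
  rw [RY_eq_transpose_circulant, transpose_transpose,
    transpose_circulant_of_odd (chiSqrt_two_mul_zmod_odd hp), neg_neg]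

lemma sum_RY_row (a : ZMod p) : ∑ c, RY p a c = 0 := by
  rw [RY_eq_transpose_circulant]
  exact (sum_circulant_col _ a).trans (chiSqrt_two_mul_zmod_odd hp).sum_eq_zero

lemma sum_RY_col (b : ZMod p) : ∑ c, RY p c b = 0 := by
  rw [RY_eq_transpose_circulant]
  exact (sum_circulant_row _ b).trans (chiSqrt_two_mul_zmod_odd hp).sum_eq_zero

end

/-- for a prime `p ≡ 5 (mod 8)`, the matrices `X` and `Y` satisfy
`Xᵀ = -X`, `Yᵀ = -Y` and `XY = YX`. -/
theorem Xmat_Ymat_skew_and_commute (p : ℕ) [Fact p.Prime] (hp : p % 8 = 5) :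
    (Xmat p)ᵀ = -(Xmat p) ∧ (Ymat p)ᵀ = -(Ymat p) ∧ Xmat p * Ymat p = Ymat p * Xmat p :=
  ⟨Xmat_transpose p (RX_transpose hp), Ymat_transpose p (RY_transpose hp),
    Xmat_mul_Ymat_comm p (RX_mul_RY_comm p) (sum_RY_row hp) (sum_RY_col hp)⟩
end

section
/- Let p be a prime with p ≡ 5 (mod 24) and let a ∈ {1,−1}. Then the ternary self-dual code NV^(a)(p) is generated by the rows of the Hadamard matrix H_{NV^(a)(p)}: the 𝔽₃-row space of H_{NV^(a)(p)} reduced modulo 3 is equal to NV^(a)(p). -/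
open Matrix

/-! Blockwise, `H_{NV^(a)(p)} = [[I, I], [-I, I]] · (a I + B_w)` over `ℤ`. The mixing matrix
times `[[I, -I], [I, I]]` is `2 I`, so it is invertible over any ring in which `2` is a unit,
in particular over `𝔽₃`, and an invertible left factor does not change the row space. -/

namespace Matrix

variable {R m n o : Type*} [Fintype n]

theorem span_range_mul_le [CommSemiring R] (P : Matrix m n R) (N : Matrix n o R) :
    Submodule.span R (Set.range (P * N)) ≤ Submodule.span R (Set.range N) := by
  rw [Submodule.span_le]
  rintro _ ⟨i, rfl⟩
  have h := LinearMap.mem_range_self N.vecMulLinear (P i)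
  rwa [range_vecMulLinear] at h

theorem span_range_mul_of_isUnit [DecidableEq n] [CommSemiring R] {P : Matrix n n R}
    (hP : IsUnit P) (N : Matrix n o R) :
    Submodule.span R (Set.range (P * N)) = Submodule.span R (Set.range N) := by
  obtain ⟨u, rfl⟩ := hP
  refine le_antisymm (span_range_mul_le _ _) ?_
  have h := span_range_mul_le (↑u⁻¹ : Matrix n n R) ((u : Matrix n n R) * N)
  rwa [← Matrix.mul_assoc, Units.inv_mul, Matrix.one_mul] at h

theorem isUnit_fromBlocks_one_one_neg_one_one [DecidableEq n] [CommRing R]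
    (h2 : IsUnit (2 : R)) :
    IsUnit (fromBlocks 1 1 (-1) 1 : Matrix (n ⊕ n) (n ⊕ n) R) := by
  refine IsUnit.of_mul_eq_one (h2.unit⁻¹.val • fromBlocks 1 (-1) 1 1) ?_
  rw [Matrix.mul_smul, fromBlocks_multiply]
  simp only [Matrix.one_mul, Matrix.neg_mul, neg_neg, neg_add_cancel, ← two_smul R]
  have h : fromBlocks ((2 : R) • 1) 0 0 ((2 : R) • 1)
      = (2 : R) • (1 : Matrix (n ⊕ n) (n ⊕ n) R) := by
    rw [← fromBlocks_one, fromBlocks_smul, smul_zero]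
  rw [h, smul_smul, h2.val_inv_mul, one_smul]

end Matrix

theorem Hnv_eq_mul_NVgen (p : ℕ) [NeZero p] (a : ℤ) :
    Hnv p a = fromBlocks 1 1 (-1) 1 * NVgen p a := by
  rw [NVgen, Bw, ← fromBlocks_one, fromBlocks_smul, fromBlocks_add, fromBlocks_multiply, Hnv]
  congr 1 <;> simp only [Matrix.one_mul, Matrix.neg_mul, smul_zero] <;> abel

theorem Hnv_generates_NVcode_general (p : ℕ) [Fact p.Prime]
    (a : ℤ) :
    Submodule.span (ZMod 3)
        (Set.range fun i => ((Hnv p a).map (Int.cast : ℤ → ZMod 3)) i) = NVcode p a := by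
  have hmap : (Hnv p a).map (Int.cast : ℤ → ZMod 3)
      = fromBlocks 1 1 (-1) 1 * (NVgen p a).map (Int.cast : ℤ → ZMod 3) := by
    rw [Hnv_eq_mul_NVgen]
    exact (Matrix.map_mul (f := Int.castRingHom (ZMod 3))).trans
      (by simp [fromBlocks_map, Matrix.map_neg])
  rw [NVcode, hmap]
  exact span_range_mul_of_isUnit (isUnit_fromBlocks_one_one_neg_one_one (by decide)) _

/-- for a prime `p ≡ 5 (mod 24)` and `a ∈ {1, -1}`, the `𝔽₃`-row space of
`H_{NV^(a)(p)}` reduced modulo 3 equals the code `NV^(a)(p)`. -/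
theorem Hnv_generates_NVcode (p : ℕ) [Fact p.Prime] (hp : p % 24 = 5)
    (a : ℤ) (ha : a = 1 ∨ a = -1) :
    Submodule.span (ZMod 3)
        (Set.range fun i => ((Hnv p a).map (Int.cast : ℤ → ZMod 3)) i) = NVcode p a :=
  Hnv_generates_NVcode_general p a
end

section
/- Let p be a prime with p ≡ 5 (mod 8), let ω be a primitive element of 𝔽_p, and set C_i = ω^i⟨ω⁴⟩ for i = 0,1,2,3 (subscripts read modulo 4). Then for every i ∈ {0,1,2,3}, the sets C_i ∪ C_{i+1} and C_{i+1} ∪ C_{i+2} are (p, (p−1)/2, (p−3)/2) supplementary difference sets in the additive group of 𝔽_p. -/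
/-- `D₁`, `D₂` are `(v, k, λ)` supplementary difference sets in `G`: `G` has order `v`,
`|D₁| = |D₂| = k`, and every nonzero `g ∈ G` is represented exactly `λ` times as a
difference `x - y` with `x, y ∈ Dᵢ`, counting over both `i = 1, 2`. -/
def IsSDS {G : Type*} [AddCommGroup G] [Fintype G] [DecidableEq G]
    (v k lam : ℕ) (D₁ D₂ : Finset G) : Prop :=
  Fintype.card G = v ∧ D₁.card = k ∧ D₂.card = k ∧
    ∀ g : G, g ≠ 0 →
      ((D₁ ×ˢ D₁).filter fun xy => xy.1 - xy.2 = g).card +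
        ((D₂ ×ˢ D₂).filter fun xy => xy.1 - xy.2 = g).card = lam

/-- The coset `C_i = ω^i ⟨ω⁴⟩` of the subgroup `⟨ω⁴⟩` of `𝔽_p^×`, viewed inside `𝔽_p`. -/
noncomputable def Cset (p : ℕ) [NeZero p] (ω : (ZMod p)ˣ) (i : ℕ) : Finset (ZMod p) :=
  open scoped Classical in
  Finset.univ.filter fun x =>
    ∃ c ∈ Subgroup.zpowers (ω ^ 4), x = (ω : ZMod p) ^ i * ((c : (ZMod p)ˣ) : ZMod p)

/-!
Write `λ_D(g)` for the number of representations `g = x - y` with `x, y ∈ D`. For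
`D₁ = C_i ∪ C_{i+1}` and `D₂ = C_{i+1} ∪ C_{i+2}` we have `ω D₁ = D₂`, and since `p ≡ 5 (mod 8)`
puts `-1 = ω^((p-1)/2)` in `ω² ⟨ω⁴⟩`, also `ω D₂ = -D₁`. As `λ_{uD}(ug) = λ_D(g)` and
`λ_{-D} = λ_D`, the function `λ_{D₁} + λ_{D₂}` is invariant under multiplication by `ω`, hence
constant on `𝔽_p^×`. Summing over `g ≠ 0` gives `(p - 1) λ = 2k(k - 1)` with `k = (p - 1)/2`, so
`λ = k - 1`.
-/

open Finset Pointwise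

section DiffCount

variable {G : Type*} [AddCommGroup G] [DecidableEq G]

def diffCount (D : Finset G) (g : G) : ℕ := #{xy ∈ D ×ˢ D | xy.1 - xy.2 = g}

lemma diffCount_zero (D : Finset G) : diffCount D 0 = #D := by
  simp_rw [diffCount, sub_eq_zero, ← diag_eq_filter, diag_card]

lemma sum_diffCount [Fintype G] (D : Finset G) : ∑ g, diffCount D g = #D ^ 2 := by
  rw [sq, ← card_product]
  exact (card_eq_sum_card_fiberwise fun xy _ => mem_univ (xy.1 - xy.2)).symm

lemma sum_diffCount_erase_zero [Fintype G] (D : Finset G) :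
    ∑ g ∈ univ.erase 0, diffCount D g = #D * (#D - 1) := by
  have h := sum_erase_add univ (diffCount D) (mem_univ 0)
  rw [sum_diffCount, diffCount_zero] at h
  rw [Nat.mul_sub_one, ← sq, ← h, Nat.add_sub_cancel]

lemma diffCount_neg_finset (D : Finset G) (g : G) : diffCount (-D) g = diffCount D g := by
  refine card_nbij' (fun xy => (-xy.2, -xy.1)) (fun xy => (-xy.2, -xy.1)) ?_ ?_ ?_ ?_ <;>
    intro xy <;> simp only [coe_filter, mem_product, mem_neg', Set.mem_ofPred_eq, neg_neg] <;>
    grind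

lemma diffCount_smul {M : Type*} [Group M] [DistribMulAction M G] (a : M) (D : Finset G)
    (g : G) : diffCount (a • D) (a • g) = diffCount D g := by
  refine card_nbij' (fun xy => (a⁻¹ • xy.1, a⁻¹ • xy.2)) (fun xy => (a • xy.1, a • xy.2))
    ?_ ?_ ?_ ?_ <;> intro xy <;> simp +contextual [← inv_smul_mem_iff, ← smul_sub]

lemma diffCount_add_diffCount_smul {M : Type*} [Group M] [DistribMulAction M G] {a : M}
    {D₁ D₂ : Finset G} (h₂ : D₂ = a • D₁) (h₁ : a • D₂ = -D₁) (g : G) :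
    diffCount D₁ (a • g) + diffCount D₂ (a • g) = diffCount D₁ g + diffCount D₂ g := by
  rw [← diffCount_neg_finset D₁, ← h₁, diffCount_smul, h₂, diffCount_smul, add_comm]

end DiffCount

lemma apply_zpow_smul_eq {M α β : Type*} [Group M] [MulAction M α] {f : α → β} {a : M}
    (hf : ∀ x, f (a • x) = f x) (n : ℤ) (x : α) : f (a ^ n • x) = f x := by
  induction n using Int.induction_on generalizing x with
  | zero => rw [zpow_zero, one_smul]
  | succ n ih => rw [zpow_add_one, mul_smul, ih, hf]
  | pred n ih => rw [zpow_sub_one, mul_smul, ih, ← hf, smul_inv_smul]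

lemma card_sub_one_mul_eq_sum_erase_zero {F : Type*} [Field F] [Fintype F] [DecidableEq F]
    {f : F → ℕ} (hf : ∀ (u : Fˣ) x, f (u • x) = f x) {g : F} (hg : g ≠ 0) :
    (Fintype.card F - 1) * f g = ∑ h ∈ univ.erase 0, f h := by
  have hconst : ∀ h ∈ univ.erase (0 : F), f h = f g := fun h hh => by
    simpa [Units.smul_def, div_mul_cancel₀ _ hg] using
      hf (Units.mk0 (h / g) (div_ne_zero (ne_of_mem_erase hh) hg)) g
  rw [sum_congr rfl hconst, sum_const, card_erase_of_mem (mem_univ _), card_univ, smul_eq_mul]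

theorem isSDS_of_smul_eq_neg {F : Type*} [Field F] [Fintype F] [DecidableEq F] {ω : Fˣ}
    (hω : ∀ u : Fˣ, u ∈ Subgroup.zpowers ω) {D₁ D₂ : Finset F} (h₂ : D₂ = ω • D₁)
    (h₁ : ω • D₂ = -D₁) {k : ℕ} (hF : Fintype.card F = 2 * k + 1) (hD₁ : #D₁ = k) :
    IsSDS (2 * k + 1) k (k - 1) D₁ D₂ := by
  have hD₂ : #D₂ = k := by rw [h₂, card_smul_finset, hD₁]
  have hinv (u : Fˣ) (x : F) :
      diffCount D₁ (u • x) + diffCount D₂ (u • x) = diffCount D₁ x + diffCount D₂ x := by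
    obtain ⟨n, rfl⟩ := Subgroup.mem_zpowers_iff.1 (hω u)
    exact apply_zpow_smul_eq (f := fun x => diffCount D₁ x + diffCount D₂ x)
      (diffCount_add_diffCount_smul h₂ h₁) n x
  have hk : 0 < k := by
    have := Fintype.one_lt_card (α := F)
    omega
  refine ⟨hF, hD₁, hD₂, fun g hg => ?_⟩
  have key := card_sub_one_mul_eq_sum_erase_zero
    (f := fun x => diffCount D₁ x + diffCount D₂ x) hinv hg
  rw [sum_add_distrib, sum_diffCount_erase_zero, sum_diffCount_erase_zero, hD₁, hD₂, hF,
    Nat.add_sub_cancel, ← two_mul, mul_assoc] at key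
  exact Nat.eq_of_mul_eq_mul_left hk (Nat.eq_of_mul_eq_mul_left two_pos key)

section Cosets

variable {p : ℕ} [Fact p.Prime] {ω : (ZMod p)ˣ}

lemma mem_Cset {j : ℕ} {x : ZMod p} :
    x ∈ Cset p ω j ↔
      ∃ c ∈ Subgroup.zpowers (ω ^ 4), ((ω ^ j * c : (ZMod p)ˣ) : ZMod p) = x := by
  simp [Cset, eq_comm]

lemma smul_Cset (j : ℕ) : ω • Cset p ω j = Cset p ω (j + 1) := by
  ext x
  simp [mem_smul_finset, mem_Cset, Units.smul_def, pow_succ', mul_assoc]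

lemma Cset_add_four_mul (j m : ℕ) : Cset p ω (j + 4 * m) = Cset p ω j := by
  have hm : (ω ^ 4) ^ m ∈ Subgroup.zpowers (ω ^ 4) := pow_mem (Subgroup.mem_zpowers _) m
  ext x
  simp only [mem_Cset]
  constructor
  · rintro ⟨c, hc, rfl⟩
    exact ⟨_, mul_mem hm hc, by rw [pow_add, pow_mul, mul_assoc]⟩
  · rintro ⟨c, hc, rfl⟩
    exact ⟨_, mul_mem (inv_mem hm) hc, by rw [pow_add, pow_mul]; group⟩

lemma pow_smul_Cset (j n : ℕ) : ω ^ n • Cset p ω j = Cset p ω (j + n) := by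
  induction n with
  | zero => rw [pow_zero, one_smul, add_zero]
  | succ n ih => rw [pow_succ', mul_smul, ih, smul_Cset, add_assoc]

lemma orderOf_eq_sub_one_of_forall_mem_zpowers (hω : ∀ x : (ZMod p)ˣ, x ∈ Subgroup.zpowers ω) :
    orderOf ω = p - 1 := by
  rw [orderOf_eq_card_of_forall_mem_zpowers hω, Nat.card_eq_fintype_card, ZMod.card_units]

lemma pow_div_two_eq_neg_one_of_forall_mem_zpowers
    (hω : ∀ x : (ZMod p)ˣ, x ∈ Subgroup.zpowers ω) (hp : p ≠ 2) :
    ω ^ (p / 2) = -1 := by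
  have h2 := (Fact.out : p.Prime).two_le
  refine Units.ext ((ZMod.pow_div_two_eq_neg_one_or_one p ω.ne_zero).resolve_left fun h1 => ?_)
  refine pow_ne_one_of_lt_orderOf (n := p / 2) (by omega) ?_ (Units.ext (by simpa using h1))
  rw [orderOf_eq_sub_one_of_forall_mem_zpowers hω]
  omega

lemma neg_Cset (hω : ∀ x : (ZMod p)ˣ, x ∈ Subgroup.zpowers ω) (hp : p % 8 = 5) (j : ℕ) :
    -Cset p ω j = Cset p ω (j + 2) := by
  have hneg : ω ^ (2 + 4 * (p / 8)) = -1 := by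
    rw [← pow_div_two_eq_neg_one_of_forall_mem_zpowers hω (by omega)]
    congr 1
    omega
  rw [← Cset_add_four_mul (j + 2) (p / 8), add_assoc, ← pow_smul_Cset, hneg]
  ext x
  simp [mem_neg', ← inv_smul_mem_iff]

lemma card_Cset (hω : ∀ x : (ZMod p)ˣ, x ∈ Subgroup.zpowers ω) (hp : 4 ∣ p - 1) (j : ℕ) :
    #(Cset p ω j) = (p - 1) / 4 := by
  let f : Subgroup.zpowers (ω ^ 4) → ZMod p := fun c => ((ω ^ j * c : (ZMod p)ˣ) : ZMod p)
  have hf : Function.Injective f := fun a b h => Subtype.ext (mul_left_cancel (Units.ext h))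
  have himage : Cset p ω j = univ.image f := by
    ext x
    simp only [mem_Cset, mem_image, mem_univ, true_and, Subtype.exists, exists_prop, f]
  rw [himage, card_image_of_injective _ hf, card_univ, Fintype.card_zpowers, orderOf_pow,
    orderOf_eq_sub_one_of_forall_mem_zpowers hω, Nat.gcd_eq_right hp]

lemma disjoint_Cset_succ (hω : ∀ x : (ZMod p)ˣ, x ∈ Subgroup.zpowers ω) (hp : p % 2 = 1)
    (j : ℕ) : Disjoint (Cset p ω j) (Cset p ω (j + 1)) := by
  rw [disjoint_left]
  rintro x hx hx'
  obtain ⟨c, hc, rfl⟩ := mem_Cset.1 hx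
  obtain ⟨d, hd, he⟩ := mem_Cset.1 hx'
  have hω4 : ω ∈ Subgroup.zpowers (ω ^ 4) := by
    have hωd : ω * d = c :=
      mul_left_cancel (a := ω ^ j) (by rw [← mul_assoc, ← pow_succ]; exact Units.ext he)
    exact (Subgroup.mul_mem_cancel_right _ hd).1 (by rw [hωd]; exact hc)
  obtain ⟨n, hn⟩ := Subgroup.mem_zpowers_iff.1 hω4
  have hdvd : ((p - 1 : ℕ) : ℤ) ∣ 4 * n - 1 := by
    rw [← orderOf_eq_sub_one_of_forall_mem_zpowers hω, orderOf_dvd_iff_zpow_eq_one, zpow_sub_one,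
      zpow_mul, zpow_ofNat, hn]
    exact mul_inv_cancel ω
  have h2 : (2 : ℤ) ∣ ((p - 1 : ℕ) : ℤ) := by exact_mod_cast (show 2 ∣ p - 1 by omega)
  have hodd := h2.trans hdvd
  omega

end Cosets

theorem cosets_union_isSDS_general (p : ℕ) [Fact p.Prime] (hp : p % 8 = 5)
    (ω : (ZMod p)ˣ) (hω : ∀ x : (ZMod p)ˣ, x ∈ Subgroup.zpowers ω)
    (i : ℕ) :
    IsSDS p ((p - 1) / 2) ((p - 3) / 2)
      (Cset p ω i ∪ Cset p ω (i + 1)) (Cset p ω (i + 1) ∪ Cset p ω (i + 2)) := by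
  have h₂ : Cset p ω (i + 1) ∪ Cset p ω (i + 2) = ω • (Cset p ω i ∪ Cset p ω (i + 1)) := by
    rw [smul_finset_union, smul_Cset, smul_Cset]
  have h₁ : ω • (Cset p ω (i + 1) ∪ Cset p ω (i + 2)) = -(Cset p ω i ∪ Cset p ω (i + 1)) := by
    rw [smul_finset_union, smul_Cset, smul_Cset, ← neg_Cset hω hp, ← neg_Cset hω hp]
    exact (image_union _ _).symm -- pointwise `-s` is `s.image Neg.neg`
  have hcard : #(Cset p ω i ∪ Cset p ω (i + 1)) = (p - 1) / 2 := by
    rw [card_union_of_disjoint (disjoint_Cset_succ hω (by omega) i), card_Cset hω (by omega),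
      card_Cset hω (by omega)]
    omega
  have h := isSDS_of_smul_eq_neg hω h₂ h₁ (by rw [ZMod.card]; omega) hcard
  rwa [show 2 * ((p - 1) / 2) + 1 = p by omega, show (p - 1) / 2 - 1 = (p - 3) / 2 by omega] at h

/-- for a prime `p ≡ 5 (mod 8)`, a primitive element `ω` of `𝔽_p` and every
`i ∈ {0, 1, 2, 3}` (subscripts of the cosets `C_i = ω^i ⟨ω⁴⟩` read modulo 4), the sets
`C_i ∪ C_{i+1}` and `C_{i+1} ∪ C_{i+2}` are `(p, (p-1)/2, (p-3)/2)` supplementary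
difference sets in the additive group of `𝔽_p`. -/
theorem cosets_union_isSDS (p : ℕ) [Fact p.Prime] (hp : p % 8 = 5)
    (ω : (ZMod p)ˣ) (hω : ∀ x : (ZMod p)ˣ, x ∈ Subgroup.zpowers ω)
    (i : ℕ) (hi : i < 4) :
    IsSDS p ((p - 1) / 2) ((p - 3) / 2)
      (Cset p ω i ∪ Cset p ω (i + 1)) (Cset p ω (i + 1) ∪ Cset p ω (i + 2)) :=
  cosets_union_isSDS_general p hp ω hω i
end

section
/- Let p be a prime with p ≡ 5 (mod 24), let ω be a primitive element of 𝔽_p, set C_i = ω^i⟨ω⁴⟩ for i = 0,1,2,3 (subscripts read modulo 4), and let ε ∈ {1,3} be the index with −2 ∈ C_ε. Let a ∈ {1,−1}. Then for all s, t ∈ 𝔽_p with s ≠ t: the (s,t) entry of R_X − R_Yᵀ equals 1 if t − s ∈ C₀ ∪ C_ε and equals −1 if t − s ∈ C₂ ∪ C_{ε+2}; and the (s,t) entry of R_Y + R_Xᵀ equals 1 if t − s ∈ C₂ ∪ C_ε and equals −1 if t − s ∈ C₀ ∪ C_{ε+2}. -/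
open Matrix

/-!
Write every nonzero element of `𝔽_p` as a power `ω ^ n`. Then `χ(c)` for `c² = ω ^ n` depends
only on `n mod 4`: it is `1, 0, -1, 0` for `n ≡ 0, 1, 2, 3`. Since `p ≡ 5 (mod 8)`, `-1` has
index `(p - 1) / 2 ≡ 2 (mod 4)`, and `-2` has index `ε` by assumption. If `t - s` has index `n`,
the four entries involved have indices `n`, `n + 2`, `n + ε` and `n + ε + 2`, so the claim is a
finite check over `n mod 4` and `ε ∈ {1, 3}`.
-/

namespace Subgroup

variable {G : Type*} [Group G] {g : G}

theorem zpow_mem_zpowers_pow_iff {k : ℕ} (hk : k ∣ orderOf g) (n : ℤ) :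
    g ^ n ∈ zpowers (g ^ k) ↔ (k : ℤ) ∣ n := by
  simp only [mem_zpowers_iff, ← zpow_natCast, ← _root_.zpow_mul, zpow_eq_zpow_iff_modEq]
  constructor
  · rintro ⟨m, hm⟩
    have : (k : ℤ) ∣ n - k * m := (Int.natCast_dvd_natCast.2 hk).trans hm.dvd
    simpa using dvd_add this (dvd_mul_right (k : ℤ) m)
  · rintro ⟨m, rfl⟩
    exact ⟨m, rfl⟩

theorem exists_pow_eq_zpow_iff (hg : ∀ x : G, x ∈ zpowers g) {k : ℕ} (hk : k ∣ orderOf g)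
    (n : ℤ) : (∃ y : G, y ^ k = g ^ n) ↔ (k : ℤ) ∣ n := by
  have hcomm (m : ℤ) : (g ^ m) ^ k = (g ^ k) ^ m := by
    rw [← zpow_natCast, ← zpow_natCast, ← _root_.zpow_mul, ← _root_.zpow_mul, mul_comm]
  rw [← zpow_mem_zpowers_pow_iff hk, mem_zpowers_iff]
  constructor
  · rintro ⟨y, hy⟩
    obtain ⟨m, rfl⟩ := mem_zpowers_iff.1 (hg y)
    exact ⟨m, by rw [← hy, hcomm]⟩
  · rintro ⟨m, hm⟩
    exact ⟨g ^ m, by rw [hcomm, hm]⟩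

end Subgroup

section GroupWithZero

variable {G₀ : Type*} [GroupWithZero G₀]

theorem Units.exists_zpow_eq_of_ne_zero {ω : G₀ˣ} (hω : ∀ x : G₀ˣ, x ∈ Subgroup.zpowers ω)
    {x : G₀} (hx : x ≠ 0) : ∃ n : ℤ, ((ω ^ n : G₀ˣ) : G₀) = x := by
  obtain ⟨n, hn⟩ := Subgroup.mem_zpowers_iff.1 (hω (Units.mk0 x hx))
  exact ⟨n, by rw [hn, Units.val_mk0]⟩

theorem exists_sq_eq_units_iff (u : G₀ˣ) :
    (∃ c : G₀, c ≠ 0 ∧ c ^ 2 = u) ↔ ∃ v : G₀ˣ, v ^ 2 = u := by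
  constructor
  · rintro ⟨c, hc, hcu⟩
    exact ⟨Units.mk0 c hc, Units.ext hcu⟩
  · rintro ⟨v, rfl⟩
    exact ⟨v, v.ne_zero, rfl⟩

theorem exists_sq_sq_eq_units_iff (u : G₀ˣ) :
    (∃ c : G₀, c ≠ 0 ∧ c ^ 2 = u ∧ ∃ d : G₀, d ^ 2 = c) ↔ ∃ v : G₀ˣ, v ^ 4 = u := by
  constructor
  · rintro ⟨c, hc, hcu, d, rfl⟩
    refine ⟨Units.mk0 d (by rintro rfl; simp at hc), Units.ext ?_⟩
    simpa [← pow_mul] using hcu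
  · rintro ⟨v, rfl⟩
    exact ⟨(v : G₀) ^ 2, by simp, by simp [← pow_mul], v, rfl⟩

end GroupWithZero

namespace ZMod

variable {p : ℕ} [Fact p.Prime] {ω : (ZMod p)ˣ}

theorem orderOf_eq_sub_one_of_forall_mem_zpowers
    (hω : ∀ x : (ZMod p)ˣ, x ∈ Subgroup.zpowers ω) : orderOf ω = p - 1 := by
  rw [orderOf_eq_card_of_forall_mem_zpowers hω, Nat.card_eq_fintype_card, card_units]

theorem exists_zpow_eq_neg_one (hp : p % 8 = 5) (hω : ∀ x : (ZMod p)ˣ, x ∈ Subgroup.zpowers ω) :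
    ∃ k : ℤ, ((ω ^ k : (ZMod p)ˣ) : ZMod p) = -1 ∧ (k : ZMod 4) = 2 := by
  have hord := orderOf_eq_sub_one_of_forall_mem_zpowers hω
  have h2 : 2 ∣ orderOf ω := by rw [hord]; omega
  have hord2 : orderOf ((ω ^ (orderOf ω / 2) : (ZMod p)ˣ) : ZMod p) = 2 := by
    rw [orderOf_units, orderOf_pow_orderOf_div (by omega) h2]
  refine ⟨(orderOf ω / 2 : ℕ), ?_, ?_⟩
  · rw [zpow_natCast]
    rwa [CharP.orderOf_eq_two_iff p (by omega)] at hord2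
  · rw [Int.cast_natCast, hord, show (2 : ZMod 4) = ((2 : ℕ) : ZMod 4) from rfl,
      natCast_eq_natCast_iff']
    omega

end ZMod

theorem zpow_mem_Cset_iff {p : ℕ} [NeZero p] {ω : (ZMod p)ˣ} (h4 : 4 ∣ orderOf ω) (i : ℕ)
    (n : ℤ) : ((ω ^ n : (ZMod p)ˣ) : ZMod p) ∈ Cset p ω i ↔ (n : ZMod 4) = i := by
  have hcoset : (∃ c ∈ Subgroup.zpowers (ω ^ 4), ω ^ n = ω ^ i * c) ↔
      ω ^ (n - i) ∈ Subgroup.zpowers (ω ^ 4) := by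
    rw [_root_.zpow_sub, zpow_natCast, mul_comm]
    exact ⟨fun ⟨c, hc, h⟩ => by rwa [h, inv_mul_cancel_left],
      fun h => ⟨_, h, (mul_inv_cancel_left _ _).symm⟩⟩
  simp only [Cset, Finset.mem_filter, Finset.mem_univ, true_and, ← Units.val_pow_eq_pow_val,
    ← Units.val_mul, Units.val_inj, hcoset, Subgroup.zpow_mem_zpowers_pow_iff h4,
    ← Int.cast_natCast (R := ZMod 4) i, ZMod.intCast_eq_intCast_iff_dvd_sub]
  exact dvd_sub_comm

def chiSqrt (p : ℕ) [NeZero p] (x : ZMod p) : ℤ :=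
  if ∃ c : ZMod p, c ≠ 0 ∧ c ^ 2 = x ∧ ∃ d : ZMod p, d ^ 2 = c then 1
  else if ∃ c : ZMod p, c ≠ 0 ∧ c ^ 2 = x then -1
  else 0

theorem RX_apply (p : ℕ) [NeZero p] (a b : ZMod p) : RX p a b = chiSqrt p (b - a) := rfl

theorem RY_apply (p : ℕ) [NeZero p] (a b : ZMod p) : RY p a b = chiSqrt p (2 * (b - a)) := rfl

def chiSqrtIndex (r : ZMod 4) : ℤ :=
  if r = 0 then 1 else if r = 2 then -1 else 0

theorem chiSqrt_zpow {p : ℕ} [Fact p.Prime] {ω : (ZMod p)ˣ}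
    (hω : ∀ x : (ZMod p)ˣ, x ∈ Subgroup.zpowers ω) (h4 : 4 ∣ orderOf ω) (n : ℤ) :
    chiSqrt p (ω ^ n : (ZMod p)ˣ) = chiSqrtIndex n := by
  have h2 : 2 ∣ orderOf ω := dvd_trans (by norm_num) h4
  unfold chiSqrt chiSqrtIndex
  simp only [exists_sq_sq_eq_units_iff, exists_sq_eq_units_iff,
    Subgroup.exists_pow_eq_zpow_iff hω h4, Subgroup.exists_pow_eq_zpow_iff hω h2,
    ← ZMod.intCast_zmod_eq_zero_iff_dvd, ← ZMod.cast_intCast (show 2 ∣ 4 by norm_num) n]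
  generalize (n : ZMod 4) = r
  revert r
  decide

theorem chiSqrtIndex_combinations {e : ZMod 4} (he : e = 1 ∨ e = 3) (r : ZMod 4) :
    (r = 0 ∨ r = e → chiSqrtIndex r - chiSqrtIndex (e + r) = 1) ∧
    (r = 2 ∨ r = e + 2 → chiSqrtIndex r - chiSqrtIndex (e + r) = -1) ∧
    (r = 2 ∨ r = e → chiSqrtIndex (2 + e + r) + chiSqrtIndex (2 + r) = 1) ∧
    (r = 0 ∨ r = e + 2 → chiSqrtIndex (2 + e + r) + chiSqrtIndex (2 + r) = -1) := by
  revert r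
  rcases he with rfl | rfl <;> decide

theorem entries_of_A'_B'_general (p : ℕ) [Fact p.Prime] (hp : p % 24 = 5)
    (ω : (ZMod p)ˣ) (hω : ∀ x : (ZMod p)ˣ, x ∈ Subgroup.zpowers ω)
    (ε : ℕ) (hε : ε = 1 ∨ ε = 3) (hm2 : (-2 : ZMod p) ∈ Cset p ω ε) :
    ∀ s t : ZMod p, s ≠ t →
      (t - s ∈ Cset p ω 0 ∪ Cset p ω ε → (RX p - (RY p)ᵀ) s t = 1) ∧
      (t - s ∈ Cset p ω 2 ∪ Cset p ω (ε + 2) → (RX p - (RY p)ᵀ) s t = -1) ∧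
      (t - s ∈ Cset p ω 2 ∪ Cset p ω ε → (RY p + (RX p)ᵀ) s t = 1) ∧
      (t - s ∈ Cset p ω 0 ∪ Cset p ω (ε + 2) → (RY p + (RX p)ᵀ) s t = -1) := by
  intro s t hst
  have h4 : 4 ∣ orderOf ω := by rw [ZMod.orderOf_eq_sub_one_of_forall_mem_zpowers hω]; omega
  obtain ⟨n, hn⟩ := Units.exists_zpow_eq_of_ne_zero hω (sub_ne_zero.2 hst.symm)
  obtain ⟨m, hm⟩ := Units.exists_zpow_eq_of_ne_zero hω (x := -2)
    (neg_ne_zero.2 (Ring.two_ne_zero (by rw [ZMod.ringChar_zmod_n]; omega)))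
  obtain ⟨k, hk, hk2⟩ := ZMod.exists_zpow_eq_neg_one (by omega) hω
  have hmε : (m : ZMod 4) = ε := (zpow_mem_Cset_iff h4 ε m).1 (hm ▸ hm2)
  have hχ (j : ℤ) {x : ZMod p} (hx : ((ω ^ j : (ZMod p)ˣ) : ZMod p) = x) :
      chiSqrt p x = chiSqrtIndex j := hx ▸ chiSqrt_zpow hω h4 j
  rw [Matrix.sub_apply, Matrix.add_apply, transpose_apply, transpose_apply, RX_apply, RX_apply,
    RY_apply, RY_apply, hχ n hn,
    hχ (m + n) (by rw [_root_.zpow_add, Units.val_mul, hm, hn]; ring),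
    hχ (k + m + n) (by
      rw [_root_.zpow_add, _root_.zpow_add, Units.val_mul, Units.val_mul, hk, hm, hn]; ring),
    hχ (k + n) (by rw [_root_.zpow_add, Units.val_mul, hk, hn]; ring)]
  simp only [Finset.mem_union, ← hn, zpow_mem_Cset_iff h4]
  push_cast [hk2, hmε]
  exact chiSqrtIndex_combinations (by rcases hε with rfl | rfl <;> simp) n

/-- for a prime `p ≡ 5 (mod 24)`, a primitive element `ω` of `𝔽_p`,
`ε ∈ {1, 3}` with `-2 ∈ C_ε`, and `a ∈ {1, -1}`: for all distinct `s, t ∈ 𝔽_p`, the `(s, t)`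
entry of `R_X - R_Yᵀ` is `1` if `t - s ∈ C₀ ∪ C_ε` and `-1` if `t - s ∈ C₂ ∪ C_{ε+2}`, and
the `(s, t)` entry of `R_Y + R_Xᵀ` is `1` if `t - s ∈ C₂ ∪ C_ε` and `-1` if
`t - s ∈ C₀ ∪ C_{ε+2}` (subscripts read modulo 4). -/
theorem entries_of_A'_B' (p : ℕ) [Fact p.Prime] (hp : p % 24 = 5)
    (ω : (ZMod p)ˣ) (hω : ∀ x : (ZMod p)ˣ, x ∈ Subgroup.zpowers ω)
    (ε : ℕ) (hε : ε = 1 ∨ ε = 3) (hm2 : (-2 : ZMod p) ∈ Cset p ω ε)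
    (a : ℤ) (ha : a = 1 ∨ a = -1) :
    ∀ s t : ZMod p, s ≠ t →
      (t - s ∈ Cset p ω 0 ∪ Cset p ω ε → (RX p - (RY p)ᵀ) s t = 1) ∧
      (t - s ∈ Cset p ω 2 ∪ Cset p ω (ε + 2) → (RX p - (RY p)ᵀ) s t = -1) ∧
      (t - s ∈ Cset p ω 2 ∪ Cset p ω ε → (RY p + (RX p)ᵀ) s t = 1) ∧
      (t - s ∈ Cset p ω 0 ∪ Cset p ω (ε + 2) → (RY p + (RX p)ᵀ) s t = -1) :=
  entries_of_A'_B'_general p hp ω hω ε hε hm2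
end
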